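/- arXiv:1911.06960 — 2 statements merged into one kernel-verified Lean document; each statement's English description precedes it below -/
import Mathlib

section
/- Let 1 < α ≤ 2, let M ≥ 2 be an integer, and let C be the (M−1)×(M−1) Toeplitz matrix with entries C_{ij} = c_{i−j}^(α), where c_k^(α) are the fractional centered difference coefficients. Then every eigenvalue λ of C satisfies 0 < λ < 2 c_0^(α). -/
/-- The fractional centered difference coefficients
`c_k^(α) = (−1)^k Γ(α+1) / (Γ(α/2 − k + 1) Γ(α/2 + k + 1))`,
interpreted as `0` when one of the Gamma arguments is a nonpositive integer. -/
noncomputable def fracCoeff (α : ℝ) (k : ℤ) : ℝ :=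
  (-1 : ℝ) ^ k * Real.Gamma (α + 1) /
    (Real.Gamma (α / 2 - k + 1) * Real.Gamma (α / 2 + k + 1))

/-!
Put `a = α / 2`. Since `1 / Γ` satisfies `1/Γ(s) = s/Γ(s+1)` everywhere,
`c_k = Γ(α+1) ∏_{j<k} (j - a) / (Γ(a+1) Γ(a+k+1))` for `k ≥ 0`. As `0 < a ≤ 1`, this shows
`c_0 > 0`, `c_k ≤ 0` for `k ≠ 0` and `c_{±1} < 0`, and the partial sums telescope to
`∑_{k<m} c_k = c_0/2 - (Γ(α+1)/(α Γ(a+1))) ∏_{j<m} (j - a) / Γ(a+m) ≥ c_0/2` for `m ≥ 1`.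
A row of `C` sums to `∑_{k≤i} c_k + ∑_{k<N-i} c_k - c_0 ≥ 0`, with strict inequality in the
first row. For a symmetric matrix with nonpositive off-diagonal entries,
`2 xᵀAx = 2 ∑ᵢ rᵢ xᵢ² - ∑ᵢⱼ Aᵢⱼ (xᵢ - xⱼ)²` with `rᵢ` the row sums, so these facts and the
nonvanishing of the entries next to the diagonal make `C` positive definite: `λ > 0`. As `C` is a
Z-matrix with diagonal `c_0`, Mathlib's spectral bound for positive definite Z-matrices gives
`λ < 2 c_0`.
-/

open Finset Matrix

namespace Real

/-- Also true at `s = 0` because Mathlib puts `Γ 0 = 0`; this lets the poles of `Γ(α/2 - k + 1)`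
at `α = 2` be handled together with `α < 2`. -/
lemma inv_Gamma_eq_self_mul_inv_Gamma_add_one (s : ℝ) : (Gamma s)⁻¹ = s * (Gamma (s + 1))⁻¹ := by
  rcases eq_or_ne s 0 with rfl | hs
  · simp
  · rw [Gamma_add_one hs, mul_inv, ← mul_assoc, mul_inv_cancel₀ hs, one_mul]

lemma inv_Gamma_sub_natCast_add_one (x : ℝ) (k : ℕ) :
    (Gamma (x - k + 1))⁻¹ = (-1) ^ k * (∏ j ∈ range k, (j - x)) * (Gamma (x + 1))⁻¹ := by
  induction k with
  | zero => simp
  | succ k ih =>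
    rw [prod_range_succ, pow_succ, inv_Gamma_eq_self_mul_inv_Gamma_add_one (x - (k + 1 : ℕ) + 1),
      show x - (k + 1 : ℕ) + 1 + 1 = x - k + 1 by push_cast; ring, ih]
    push_cast; ring

end Real

lemma fracCoeff_neg (α : ℝ) (k : ℤ) : fracCoeff α (-k) = fracCoeff α k := by
  rw [fracCoeff, fracCoeff, ← _root_.inv_zpow', inv_neg_one, Int.cast_neg, sub_neg_eq_add,
    ← sub_eq_add_neg, mul_comm (Real.Gamma _)]

lemma fracCoeff_natCast (α : ℝ) (k : ℕ) :
    fracCoeff α k = Real.Gamma (α + 1) * (∏ j ∈ range k, (j - α / 2)) /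
      (Real.Gamma (α / 2 + 1) * Real.Gamma (α / 2 + k + 1)) := by
  have hsign : ((-1 : ℝ) ^ k) ^ 2 = 1 := by rw [← pow_mul, pow_mul', neg_one_sq, one_pow]
  rw [fracCoeff, zpow_natCast, Int.cast_natCast, div_eq_mul_inv, mul_inv,
    Real.inv_Gamma_sub_natCast_add_one]
  linear_combination (Real.Gamma (α + 1) * (∏ j ∈ range k, (j - α / 2)) *
    (Real.Gamma (α / 2 + 1))⁻¹ * (Real.Gamma (α / 2 + k + 1))⁻¹) * hsign

lemma prod_range_natCast_sub_nonpos {a : ℝ} (ha0 : 0 ≤ a) (ha1 : a ≤ 1) {k : ℕ} (hk : k ≠ 0) :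
    ∏ j ∈ range k, ((j : ℝ) - a) ≤ 0 := by
  obtain ⟨k, rfl⟩ := Nat.exists_eq_succ_of_ne_zero hk
  rw [prod_range_succ', Nat.cast_zero, zero_sub]
  refine mul_nonpos_of_nonneg_of_nonpos (prod_nonneg fun j _ => ?_) (by linarith)
  push_cast
  linarith [(j.cast_nonneg : (0 : ℝ) ≤ j)]

lemma fracCoeff_natCast_nonpos {α : ℝ} (hα0 : 0 < α) (hα2 : α ≤ 2) {k : ℕ} (hk : k ≠ 0) :
    fracCoeff α k ≤ 0 := by
  rw [fracCoeff_natCast]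
  refine div_nonpos_of_nonpos_of_nonneg (mul_nonpos_of_nonneg_of_nonpos (by positivity)
    (prod_range_natCast_sub_nonpos (by positivity) (by linarith) hk)) (by positivity)

lemma fracCoeff_nonpos {α : ℝ} (hα0 : 0 < α) (hα2 : α ≤ 2) {k : ℤ} (hk : k ≠ 0) :
    fracCoeff α k ≤ 0 := by
  obtain ⟨k, rfl | rfl⟩ := Int.eq_nat_or_neg k
  · exact fracCoeff_natCast_nonpos hα0 hα2 (by exact_mod_cast hk)
  · rw [fracCoeff_neg]; exact fracCoeff_natCast_nonpos hα0 hα2 (by omega)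

lemma fracCoeff_one_neg {α : ℝ} (hα0 : 0 < α) : fracCoeff α 1 < 0 := by
  have h := fracCoeff_natCast α 1
  rw [Nat.cast_one, prod_range_one, Nat.cast_zero, zero_sub] at h
  rw [h]
  exact div_neg_of_neg_of_pos (mul_neg_of_pos_of_neg (by positivity) (by linarith)) (by positivity)

lemma fracCoeff_zero_pos {α : ℝ} (hα0 : 0 < α) : 0 < fracCoeff α 0 := by
  have h := fracCoeff_natCast α 0
  rw [prod_range_zero, Nat.cast_zero, Nat.cast_zero] at h
  rw [h]
  positivity

lemma sum_range_fracCoeff {α : ℝ} (hα0 : 0 < α) (m : ℕ) :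
    ∑ k ∈ range m, fracCoeff α k = Real.Gamma (α + 1) / (α * Real.Gamma (α / 2 + 1)) *
      ((Real.Gamma (α / 2))⁻¹ - (∏ j ∈ range m, (j - α / 2)) / Real.Gamma (α / 2 + m)) := by
  induction m with
  | zero => simp
  | succ m ih =>
    have hrec : Real.Gamma (α / 2 + m + 1) = (α / 2 + m) * Real.Gamma (α / 2 + m) :=
      Real.Gamma_add_one (by positivity)
    have : 0 < Real.Gamma (α / 2 + m) := by positivity
    have : 0 < Real.Gamma (α / 2 + 1) := by positivity
    rw [sum_range_succ, ih, fracCoeff_natCast, prod_range_succ, Nat.cast_succ, ← add_assoc, hrec]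
    field_simp
    ring

lemma half_fracCoeff_zero_le_sum_range {α : ℝ} (hα0 : 0 < α) (hα2 : α ≤ 2) {m : ℕ} (hm : m ≠ 0) :
    fracCoeff α 0 / 2 ≤ ∑ k ∈ range m, fracCoeff α k := by
  have hrec : Real.Gamma (α / 2 + 1) = α / 2 * Real.Gamma (α / 2) :=
    Real.Gamma_add_one (by positivity)
  have : 0 < Real.Gamma (α / 2) := by positivity
  have hdiff : ∑ k ∈ range m, fracCoeff α k - fracCoeff α 0 / 2 =
      Real.Gamma (α + 1) / (α * Real.Gamma (α / 2 + 1)) *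
        (-(∏ j ∈ range m, (j - α / 2)) / Real.Gamma (α / 2 + m)) := by
    have h0 := fracCoeff_natCast α 0
    rw [prod_range_zero, Nat.cast_zero, Nat.cast_zero, add_zero] at h0
    rw [sum_range_fracCoeff hα0, h0, hrec]
    field_simp
    ring
  have hQ := prod_range_natCast_sub_nonpos (a := α / 2) (by positivity) (by linarith) hm
  rw [← sub_nonneg, hdiff]
  exact mul_nonneg (by positivity) (div_nonneg (neg_nonneg.mpr hQ) (by positivity))

lemma Fin.sum_apply_sub_add_apply_zero {R : Type*} [AddCommMonoid R] (f : ℤ → R)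
    (hf : ∀ k, f (-k) = f k) {N : ℕ} (i : Fin N) :
    ∑ j : Fin N, f (i - j) + f 0 = ∑ k ∈ range (i + 1), f k + ∑ k ∈ range (N - i), f k := by
  have hsplit := sum_range_add_sum_Ico (fun j : ℕ => f (i - j)) (i.isLt : (i : ℕ) + 1 ≤ N)
  have hleft : ∑ j ∈ range (i + 1), f (i - j) = ∑ k ∈ range (i + 1), f k := by
    rw [← sum_range_reflect]
    refine sum_congr rfl fun j hj => congrArg f ?_
    have := mem_range.mp hj
    omega
  have hright : ∑ j ∈ Ico ((i : ℕ) + 1) N, f (i - j) + f 0 = ∑ k ∈ range (N - i), f k := by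
    rw [sum_Ico_eq_sum_range, show N - i = N - (i + 1) + 1 by omega, sum_range_succ']
    congr 1
    refine sum_congr rfl fun k _ => ?_
    rw [← hf]
    push_cast
    ring_nf
  rw [Fin.sum_univ_eq_sum_range (fun j => f (i - j)), ← hsplit, hleft, add_assoc, hright]

lemma Matrix.IsSymm.two_mul_dotProduct_mulVec {ι R : Type*} [Fintype ι] [CommRing R]
    {A : Matrix ι ι R} (hA : A.IsSymm) (x : ι → R) :
    2 * (x ⬝ᵥ A *ᵥ x) = 2 * ∑ i, (∑ j, A i j) * x i ^ 2 - ∑ i, ∑ j, A i j * (x i - x j) ^ 2 := by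
  have hswap : ∑ i, ∑ j, A i j * x j ^ 2 = ∑ i, ∑ j, A i j * x i ^ 2 := by
    rw [sum_comm]
    exact sum_congr rfl fun i _ => sum_congr rfl fun j _ => by rw [hA.apply i j]
  have hexpand : ∑ i, ∑ j, A i j * (x i - x j) ^ 2 =
      ∑ i, ∑ j, A i j * x i ^ 2 + ∑ i, ∑ j, A i j * x j ^ 2 - 2 * ∑ i, ∑ j, x i * A i j * x j := by
    simp only [mul_sum, ← sum_add_distrib, ← sum_sub_distrib]
    exact sum_congr rfl fun i _ => sum_congr rfl fun j _ => by ring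
  rw [dot_mulVec_eq_sum_sum, sum_comm, hexpand, hswap]
  simp only [sum_mul]
  ring

lemma Matrix.posDef_of_offDiag_nonpos_of_rowSum_nonneg {n : ℕ}
    {A : Matrix (Fin (n + 1)) (Fin (n + 1)) ℝ} (hA : A.IsSymm) (hoff : ∀ i j, i ≠ j → A i j ≤ 0)
    (hrow : ∀ i, 0 ≤ ∑ j, A i j) (hrow0 : 0 < ∑ j, A 0 j)
    (hchain : ∀ m : Fin n, A m.castSucc m.succ < 0) : A.PosDef := by
  refine .of_dotProduct_mulVec_pos (isHermitian_iff_isSymm.mpr hA) fun x hx => ?_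
  rw [star_trivial]
  have hdiag : ∀ i, 0 ≤ (∑ j, A i j) * x i ^ 2 := fun i => mul_nonneg (hrow i) (sq_nonneg _)
  have hoffdiag : ∀ i j, 0 ≤ -(A i j * (x i - x j) ^ 2) := by
    intro i j
    rcases eq_or_ne i j with rfl | hij
    · simp
    · exact neg_nonneg.mpr (mul_nonpos_of_nonpos_of_nonneg (hoff i j hij) (sq_nonneg _))
  have hQ := hA.two_mul_dotProduct_mulVec x
  rw [sub_eq_add_neg, ← sum_neg_distrib] at hQ
  simp only [← sum_neg_distrib] at hQ
  have hS1 := sum_nonneg fun i (_ : i ∈ univ) => hdiag i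
  have hS2 := sum_nonneg fun i (_ : i ∈ univ) => sum_nonneg fun j (_ : j ∈ univ) => hoffdiag i j
  by_contra! hle
  have hx0 : x 0 = 0 := by
    have := single_le_sum (fun i _ => hdiag i) (mem_univ 0)
    exact (sq_nonpos_iff _).mp (nonpos_of_mul_nonpos_right (by linarith) hrow0)
  have hstep : ∀ m : Fin n, x m.succ = x m.castSucc := by
    intro m
    have h1 := single_le_sum (fun j _ => hoffdiag m.castSucc j) (mem_univ m.succ)
    have h2 := single_le_sum (fun i _ => sum_nonneg fun j (_ : j ∈ univ) => hoffdiag i j)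
      (mem_univ m.castSucc)
    have h3 : (-A m.castSucc m.succ) * (x m.castSucc - x m.succ) ^ 2 ≤ 0 := by linarith
    have h4 := (sq_nonpos_iff _).mp (nonpos_of_mul_nonpos_right h3 (neg_pos.mpr (hchain m)))
    linarith
  exact hx (funext (Fin.induction hx0 fun m h => (hstep m).trans h))

noncomputable def fracToeplitz (α : ℝ) (N : ℕ) : Matrix (Fin N) (Fin N) ℝ :=
  Matrix.of fun i j => fracCoeff α (i - j)

lemma fracToeplitz_rowSum_add {α : ℝ} {N : ℕ} (i : Fin N) :
    ∑ j, fracToeplitz α N i j + fracCoeff α 0 =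
      ∑ k ∈ range (i + 1), fracCoeff α k + ∑ k ∈ range (N - i), fracCoeff α k := by
  simpa [fracToeplitz] using Fin.sum_apply_sub_add_apply_zero (fracCoeff α) (fracCoeff_neg α) i

section

variable {α : ℝ} (hα0 : 0 < α) (hα2 : α ≤ 2)
include hα0 hα2

lemma fracToeplitz_apply_nonpos {N : ℕ} {i j : Fin N} (hij : i ≠ j) : fracToeplitz α N i j ≤ 0 :=
  fracCoeff_nonpos hα0 hα2 (sub_ne_zero.mpr (by exact_mod_cast Fin.val_ne_of_ne hij))

lemma posDef_fracToeplitz (n : ℕ) : (fracToeplitz α (n + 1)).PosDef := by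
  refine Matrix.posDef_of_offDiag_nonpos_of_rowSum_nonneg ?_ ?_ ?_ ?_ ?_
  · refine Matrix.IsSymm.ext fun i j => ?_
    simp only [fracToeplitz, of_apply, ← fracCoeff_neg α (j - i), neg_sub]
  · exact fun i j => fracToeplitz_apply_nonpos hα0 hα2
  · intro i
    have := fracToeplitz_rowSum_add (α := α) i
    have := half_fracCoeff_zero_le_sum_range hα0 hα2 (m := i + 1) (by omega)
    have := half_fracCoeff_zero_le_sum_range hα0 hα2 (m := n + 1 - i) (by omega)
    linarith
  · have hrow0 := fracToeplitz_rowSum_add (α := α) (0 : Fin (n + 1))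
    simp only [Fin.val_zero, zero_add, sum_range_one, Nat.cast_zero, Nat.sub_zero] at hrow0
    have := half_fracCoeff_zero_le_sum_range hα0 hα2 (m := n + 1) (by omega)
    have := fracCoeff_zero_pos hα0
    linarith
  · intro m
    simpa [fracToeplitz, fracCoeff_neg] using fracCoeff_one_neg hα0

lemma mem_spectrum_fracToeplitz {n : ℕ} {lam : ℝ} (h : lam ∈ spectrum ℝ (fracToeplitz α (n + 1))) :
    0 < lam ∧ lam < 2 * fracCoeff α 0 := by
  have hPD := posDef_fracToeplitz hα0 hα2 n
  refine ⟨?_, ?_⟩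
  · obtain ⟨i, rfl⟩ := hPD.1.spectrum_real_eq_range_eigenvalues ▸ h
    exact hPD.eigenvalues_pos i
  · refine lt_two_mul_of_mul_diagonal_posDef_of_for_le_of_hasEigen _ 1 (by simpa using hPD)
      (fun _ => one_pos) _ _ (fun i j => ?_) ?_
    · split_ifs with hij
      · simp [fracToeplitz, hij]
      · exact fracToeplitz_apply_nonpos hα0 hα2 hij
    · exact Module.End.hasEigenvalue_iff_mem_spectrum.mpr (by rwa [spectrum_toLin'])

end

theorem stmt3 (α : ℝ) (hα1 : 1 < α) (hα2 : α ≤ 2) (M : ℕ) (hM : 2 ≤ M)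
    (Cm : Matrix (Fin (M - 1)) (Fin (M - 1)) ℝ)
    (hC : ∀ i j, Cm i j = fracCoeff α ((i : ℤ) - (j : ℤ))) :
    ∀ lam : ℝ, lam ∈ spectrum ℝ Cm → 0 < lam ∧ lam < 2 * fracCoeff α 0 := by
  intro lam hlam
  obtain rfl : Cm = fracToeplitz α (M - 1) := Matrix.ext hC
  obtain ⟨n, hn⟩ : ∃ n, M - 1 = n + 1 := ⟨M - 2, by omega⟩
  rw [hn] at hlam
  exact mem_spectrum_fracToeplitz (by linarith) hα2 hlam
end

section
/- Let 1 < α ≤ 2, let M ≥ 2 be an integer, let h > 0, and let C be the (M−1)×(M−1) Toeplitz matrix with entries C_{ij} = c_{i−j}^(α). Suppose U, V, W : ℝ → ℝ^{M−1} are differentiable functions satisfying, for every t and every component j (1 ≤ j ≤ M−1): U_j'(t) = V_j(t); V_j'(t) = −(h^{−α} C U(t))_j − B(U_j(t)) W_j(t); W_j'(t) = (1/2) B(U_j(t)) V_j(t), where B(x) = sin(x)/√(2 − cos(x)). Then the semi-discrete energy Ẽ(t) = (1/2)( ‖V(t)‖² + h^{−α} (U(t))ᵀ C U(t) · h + 2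 ‖W(t)‖² ), with ‖u‖² = h ∑_{j=1}^{M−1} u_j², is constant in t: Ẽ(t) = Ẽ(0) for all t. -/
/-- `B(x) = sin x / √(2 − cos x)`. -/
noncomputable def Bfun (x : ℝ) : ℝ := Real.sin x / Real.sqrt (2 - Real.cos x)

/-!
Write `K = h^{-α} C`. Since `c_{-k} = c_k`, the matrix `K` is symmetric, so
`d/dt (Uᵀ K U) = 2 Vᵀ K U`, which cancels the linear force in `d/dt ‖V‖²`. The variable `W`
plays the role of `√(2 − cos U)`: the nonlinear force `−B(U) W` contributes `−2 V·B(U)W` to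
`d/dt ‖V‖²`, and `W' = ½ B(U) V` contributes exactly the opposite to `d/dt 2‖W‖²`.
Hence the energy has zero derivative and is constant.
-/

lemma fracCoeff_even (α : ℝ) : (fracCoeff α).Even := by
  intro k
  unfold fracCoeff
  push_cast
  rw [show α / 2 - -(k : ℝ) + 1 = α / 2 + k + 1 by ring,
    show α / 2 + -(k : ℝ) + 1 = α / 2 - k + 1 by ring,
    zpow_neg, ← inv_zpow, inv_neg, inv_one, mul_comm (Real.Gamma (α / 2 + k + 1))]

open Matrix

lemma Matrix.isSymm_of_apply_eq_even {R : Type*} {n : ℕ} {c : ℤ → R} (hc : c.Even)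
    {A : Matrix (Fin n) (Fin n) R} (hA : ∀ i j, A i j = c ((i : ℤ) - j)) : A.IsSymm :=
  IsSymm.ext fun i j => by rw [hA, hA, ← hc, neg_sub]

section Calculus

variable {ι : Type*} [Fintype ι] {u v : ℝ → ι → ℝ} {u' v' : ι → ℝ} {t : ℝ}

lemma HasDerivAt.dotProduct (hu : HasDerivAt u u' t) (hv : HasDerivAt v v' t) :
    HasDerivAt (fun s => u s ⬝ᵥ v s) (u' ⬝ᵥ v t + u t ⬝ᵥ v') t := by
  simp only [_root_.dotProduct, ← Finset.sum_add_distrib]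
  exact HasDerivAt.fun_sum fun j _ => (hasDerivAt_pi.1 hu j).mul (hasDerivAt_pi.1 hv j)

lemma HasDerivAt.dotProduct_self (hu : HasDerivAt u u' t) :
    HasDerivAt (fun s => u s ⬝ᵥ u s) (2 * (u' ⬝ᵥ u t)) t := by
  convert hu.dotProduct hu using 1
  rw [dotProduct_comm (u t)]
  ring

lemma HasDerivAt.mulVec (A : Matrix ι ι ℝ) (hu : HasDerivAt u u' t) :
    HasDerivAt (fun s => A *ᵥ u s) (A *ᵥ u') t :=
  hasDerivAt_pi.2 fun i => HasDerivAt.fun_sum fun j _ => (hasDerivAt_pi.1 hu j).const_mul (A i j)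

lemma HasDerivAt.dotProduct_mulVec_self {A : Matrix ι ι ℝ} (hA : A.IsSymm)
    (hu : HasDerivAt u u' t) :
    HasDerivAt (fun s => u s ⬝ᵥ A *ᵥ u s) (2 * (u' ⬝ᵥ A *ᵥ u t)) t := by
  convert hu.dotProduct (hu.mulVec A) using 1
  rw [dotProduct_mulVec, ← mulVec_transpose, hA.eq, dotProduct_comm]
  ring

end Calculus

section Energy

variable {ι : Type*} [Fintype ι]

def energy (K : Matrix ι ι ℝ) (u v w : ι → ℝ) : ℝ :=
  v ⬝ᵥ v + u ⬝ᵥ K *ᵥ u + 2 * (w ⬝ᵥ w)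

theorem energy_eq_energy_zero {K : Matrix ι ι ℝ} (hK : K.IsSymm) (b : ℝ → ℝ)
    {U V W : ℝ → ι → ℝ}
    (hU : ∀ t j, HasDerivAt (fun s => U s j) (V t j) t)
    (hV : ∀ t j, HasDerivAt (fun s => V s j) (-(K *ᵥ U t) j - b (U t j) * W t j) t)
    (hW : ∀ t j, HasDerivAt (fun s => W s j) (1 / 2 * b (U t j) * V t j) t) (t : ℝ) :
    energy K (U t) (V t) (W t) = energy K (U 0) (V 0) (W 0) := by
  have hE : ∀ t, HasDerivAt (fun s => energy K (U s) (V s) (W s)) 0 t := by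
    intro t
    have hU' := hasDerivAt_pi.2 (hU t)
    have hV' := hasDerivAt_pi.2 (hV t)
    have hW' := hasDerivAt_pi.2 (hW t)
    refine ((hV'.dotProduct_self.add (hU'.dotProduct_mulVec_self hK)).add
      (hW'.dotProduct_self.const_mul 2)).congr_deriv ?_
    simp only [dotProduct, Finset.mul_sum, ← Finset.sum_add_distrib]
    exact Finset.sum_eq_zero fun j _ => by ring
  exact is_const_of_deriv_eq_zero (fun s => (hE s).differentiableAt) (fun s => (hE s).deriv) t 0

end Energy

theorem stmt6_general (α : ℝ) (M : ℕ) (h : ℝ)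
    (Cm : Matrix (Fin (M - 1)) (Fin (M - 1)) ℝ)
    (hC : ∀ i j, Cm i j = fracCoeff α ((i : ℤ) - (j : ℤ)))
    (U V W : ℝ → Fin (M - 1) → ℝ)
    (hU : ∀ (t : ℝ) (j : Fin (M - 1)), HasDerivAt (fun s => U s j) (V t j) t)
    (hV : ∀ (t : ℝ) (j : Fin (M - 1)), HasDerivAt (fun s => V s j)
      (-(h ^ (-α) • Cm.mulVec (U t)) j - Bfun (U t j) * W t j) t)
    (hW : ∀ (t : ℝ) (j : Fin (M - 1)), HasDerivAt (fun s => W s j)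
      ((1 / 2) * Bfun (U t j) * V t j) t) :
    ∀ t : ℝ,
      (1 / 2) * ((h * ∑ j, (V t j) ^ 2) +
        h ^ (-α) * dotProduct (U t) (Cm.mulVec (U t)) * h +
        2 * (h * ∑ j, (W t j) ^ 2)) =
      (1 / 2) * ((h * ∑ j, (V 0 j) ^ 2) +
        h ^ (-α) * dotProduct (U 0) (Cm.mulVec (U 0)) * h +
        2 * (h * ∑ j, (W 0 j) ^ 2)) := by
  have hK : (h ^ (-α) • Cm).IsSymm := (isSymm_of_apply_eq_even (fracCoeff_even α) hC).smul _
  intro t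
  have key := energy_eq_energy_zero hK Bfun hU (by simpa only [smul_mulVec] using hV) hW t
  rw [energy, energy, smul_mulVec, smul_mulVec, dotProduct_smul, dotProduct_smul] at key
  simp only [smul_eq_mul, dotProduct, sq] at key ⊢
  linear_combination h / 2 * key

theorem stmt6 (α : ℝ) (hα1 : 1 < α) (hα2 : α ≤ 2) (M : ℕ) (hM : 2 ≤ M)
    (h : ℝ) (hh : 0 < h)
    (Cm : Matrix (Fin (M - 1)) (Fin (M - 1)) ℝ)
    (hC : ∀ i j, Cm i j = fracCoeff α ((i : ℤ) - (j : ℤ)))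
    (U V W : ℝ → Fin (M - 1) → ℝ)
    (hU : ∀ (t : ℝ) (j : Fin (M - 1)), HasDerivAt (fun s => U s j) (V t j) t)
    (hV : ∀ (t : ℝ) (j : Fin (M - 1)), HasDerivAt (fun s => V s j)
      (-(h ^ (-α) • Cm.mulVec (U t)) j - Bfun (U t j) * W t j) t)
    (hW : ∀ (t : ℝ) (j : Fin (M - 1)), HasDerivAt (fun s => W s j)
      ((1 / 2) * Bfun (U t j) * V t j) t) :
    ∀ t : ℝ,
      (1 / 2) * ((h * ∑ j, (V t j) ^ 2) +
        h ^ (-α) * dotProduct (U t) (Cm.mulVec (U t)) * h +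
        2 * (h * ∑ j, (W t j) ^ 2)) =
      (1 / 2) * ((h * ∑ j, (V 0 j) ^ 2) +
        h ^ (-α) * dotProduct (U 0) (Cm.mulVec (U 0)) * h +
        2 * (h * ∑ j, (W 0 j) ^ 2)) :=
  stmt6_general α M h Cm hC U V W hU hV hW
end
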